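/- Let C = J₂ be the 2×2 all-ones matrix and s = 1. Then for every γ > 0, linx(J₂,1;γ) = (1/2)·log(1 + 1/(4γ)). In particular, linx(J₂,1;γ) is strictly decreasing in γ, so there is no optimal scaling parameter: for every γ > 0 there exists γ' > 0 with linx(J₂,1;γ') < linx(J₂,1;γ). -/
import Mathlib

open Matrix Real Set

noncomputable section

/-- The feasible polytope `P(n,s)`. -/
def PP (n s : ℕ) : Set (Fin n → ℝ) :=
  {x | (∑ i, x i) = (s : ℝ) ∧ ∀ i, 0 ≤ x i ∧ x i ≤ 1}

/-- The scaled linx objective `f(C,s;γ;x)`. -/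
def fLinxScaled {n : ℕ} (C : Matrix (Fin n) (Fin n) ℝ) (s : ℕ) (γ : ℝ) (x : Fin n → ℝ) : ℝ :=
  (1 / 2) * (Real.log ((γ • (C * Matrix.diagonal x * C) + Matrix.diagonal fun i => 1 - x i).det)
    - (s : ℝ) * Real.log γ)

/-- The scaled linx bound `linx(C,s;γ)`. -/
def linxScaled (n s : ℕ) (C : Matrix (Fin n) (Fin n) ℝ) (γ : ℝ) : ℝ :=
  sSup (fLinxScaled C s γ '' PP n s)

/-- The all-ones matrix `J₂`. -/
def J2 : Matrix (Fin 2) (Fin 2) ℝ := Matrix.of fun _ _ => 1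

lemma det_J2 (γ : ℝ) (x : Fin 2 → ℝ) :
    (γ • (J2 * Matrix.diagonal x * J2) + Matrix.diagonal fun i => 1 - x i).det
      = γ * (x 0 + x 1) * (2 - (x 0 + x 1)) + (1 - x 0) * (1 - x 1) := by
  simp [Matrix.det_fin_two, Matrix.mul_apply, Matrix.diagonal, J2, Fin.sum_univ_two]
  ring

lemma aux_le (γ a b : ℝ) (h10 : 0 ≤ b) (h11 : b ≤ 1) (hsum : a + b = 1) :
    γ * (a + b) * (2 - (a + b)) + (1 - a) * (1 - b) ≤ γ + 1 / 4 := by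
  have hb2 : b = 1 - a := by linarith
  subst hb2; nlinarith [sq_nonneg (2 * a - 1)]

lemma aux_pos (γ a b : ℝ) (hγ : 0 < γ) (h10 : 0 ≤ b) (h11 : b ≤ 1) (hsum : a + b = 1) :
    0 < γ * (a + b) * (2 - (a + b)) + (1 - a) * (1 - b) := by
  have hb2 : b = 1 - a := by linarith
  subst hb2; nlinarith

lemma value_eq (γ : ℝ) (hγ : 0 < γ) :
    linxScaled 2 1 J2 γ = (1 / 2) * Real.log (1 + 1 / (4 * γ)) := by
  have hval : (1 / 2 : ℝ) * Real.log (1 + 1 / (4 * γ))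
      = (1 / 2) * (Real.log (γ + 1 / 4) - Real.log γ) := by
    rw [← Real.log_div (by positivity) (ne_of_gt hγ)]
    congr 2
    field_simp
  apply IsGreatest.csSup_eq
  constructor
  · refine ⟨fun _ => 1 / 2, ⟨by norm_num [Fin.sum_univ_two], fun i => by norm_num⟩, ?_⟩
    rw [fLinxScaled, det_J2, hval]
    norm_num
  · rintro y ⟨x, ⟨hsum, hb⟩, rfl⟩
    rw [Fin.sum_univ_two] at hsum
    norm_num at hsum
    rw [fLinxScaled, det_J2, hval]
    obtain ⟨h00, h01⟩ := hb 0
    obtain ⟨h10, h11⟩ := hb 1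
    have hle := aux_le γ (x 0) (x 1) h10 h11 hsum
    have hpos := aux_pos γ (x 0) (x 1) hγ h10 h11 hsum
    have := Real.log_le_log hpos hle
    push_cast
    nlinarith [this]

theorem stmt_15 :
    (∀ γ : ℝ, 0 < γ →
      linxScaled 2 1 J2 γ = (1 / 2) * Real.log (1 + 1 / (4 * γ))) ∧
    (∀ γ₁ γ₂ : ℝ, 0 < γ₁ → γ₁ < γ₂ →
      linxScaled 2 1 J2 γ₂ < linxScaled 2 1 J2 γ₁) ∧
    (∀ γ : ℝ, 0 < γ → ∃ γ' : ℝ, 0 < γ' ∧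
      linxScaled 2 1 J2 γ' < linxScaled 2 1 J2 γ) := by
  have hmono : ∀ γ₁ γ₂ : ℝ, 0 < γ₁ → γ₁ < γ₂ →
      linxScaled 2 1 J2 γ₂ < linxScaled 2 1 J2 γ₁ := by
    intro γ₁ γ₂ h1 h2
    rw [value_eq γ₁ h1, value_eq γ₂ (h1.trans h2)]
    have : Real.log (1 + 1 / (4 * γ₂)) < Real.log (1 + 1 / (4 * γ₁)) := by
      have hγ₂ : (0:ℝ) < γ₂ := h1.trans h2
      apply Real.log_lt_log (by positivity)
      have : 1 / (4 * γ₂) < 1 / (4 * γ₁) := by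
        apply one_div_lt_one_div_of_lt (by positivity)
        linarith
      linarith
    linarith
  exact ⟨value_eq, hmono, fun γ hγ => ⟨γ + 1, by linarith, hmono γ (γ + 1) hγ (by linarith)⟩⟩
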